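/- If G is an almost bipartite graph with unique odd cycle C and G is not a König-Egerváry graph, then core(G) ∩ N[V(C)] = ∅, i.e., no vertex of the intersection of all maximum independent sets lies on C or has a neighbor on C. -/

import Mathlib

namespace AlmostBip

open SimpleGraph

variable {V : Type*}

/-- A set of vertices is independent if no two of its vertices are adjacent. -/
def IsIndepSet (G : SimpleGraph V) (s : Set V) : Prop :=
  s.Pairwise fun a b => ¬ G.Adj a b

/-- The independence number `α(G)`: the maximum size of an independent set. -/
noncomputable def alpha (G : SimpleGraph V) : ℕ :=
  sSup {n | ∃ s : Set V, IsIndepSet G s ∧ s.ncard = n}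

/-- `Ω(G)`: the family of all maximum independent sets. -/
def Omega (G : SimpleGraph V) : Set (Set V) :=
  {s | IsIndepSet G s ∧ s.ncard = alpha G}

/-- `core(G)`: the intersection of all maximum independent sets. -/
def core (G : SimpleGraph V) : Set V := ⋂₀ Omega G

/-- `corona(G)`: the union of all maximum independent sets. -/
def corona (G : SimpleGraph V) : Set V := ⋃₀ Omega G

/-- A matching: a set of edges of `G` that are pairwise non-incident. -/
def IsMatching (G : SimpleGraph V) (M : Set (Sym2 V)) : Prop :=
  M ⊆ G.edgeSet ∧ M.Pairwise fun e f => ∀ x, x ∈ e → x ∉ f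

/-- The matching number `μ(G)`: the maximum size of a matching. -/
noncomputable def mu (G : SimpleGraph V) : ℕ :=
  sSup {n | ∃ M : Set (Sym2 V), IsMatching G M ∧ M.ncard = n}

/-- A König-Egerváry graph: `α(G) + μ(G) = |V(G)|`. -/
def KonigEgervary (G : SimpleGraph V) : Prop :=
  alpha G + mu G = Nat.card V

/-- `N(A)`: the set of vertices having a neighbour in `A`. -/
def nbhd (G : SimpleGraph V) (A : Set V) : Set V :=
  {x | ∃ a ∈ A, G.Adj x a}

/-- The difference `d_G(A) = |A| - |N(A)|`. -/
noncomputable def diffOf (G : SimpleGraph V) (A : Set V) : ℤ :=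
  (A.ncard : ℤ) - ((nbhd G A).ncard : ℤ)

/-- The critical difference `d(G) = max {d_G(A) : A ⊆ V(G)}`. -/
noncomputable def critDiff (G : SimpleGraph V) : ℤ :=
  sSup {d | ∃ A : Set V, diffOf G A = d}

/-- A set is critical if its difference attains the critical difference. -/
def IsCriticalSet (G : SimpleGraph V) (A : Set V) : Prop :=
  diffOf G A = critDiff G

/-- `ker(G)`: the intersection of all critical independent sets. -/
def ker (G : SimpleGraph V) : Set V :=
  ⋂₀ {A : Set V | IsCriticalSet G A ∧ IsIndepSet G A}

/-- A closed walk is an odd cycle if it is a cycle of odd length. -/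
def IsOddCycle (G : SimpleGraph V) {v : V} (c : G.Walk v v) : Prop :=
  c.IsCycle ∧ Odd c.length

/-- `c` is the unique odd cycle of `G`: it is an odd cycle and any odd cycle
of `G` has the same edge set as `c`. -/
def UniqueOddCycle (G : SimpleGraph V) {v : V} (c : G.Walk v v) : Prop :=
  IsOddCycle G c ∧
    ∀ (u : V) (c' : G.Walk u u), IsOddCycle G c' →
      {e | e ∈ c'.edges} = {e | e ∈ c.edges}

/-- `G` is almost bipartite if it has a unique odd cycle. -/
def AlmostBipartite (G : SimpleGraph V) : Prop :=
  ∃ (v : V) (c : G.Walk v v), UniqueOddCycle G c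

/-- `V(C)`: the vertex set of a cycle given as a closed walk. -/
def cycleVerts {G : SimpleGraph V} {v : V} (c : G.Walk v v) : Set V :=
  {u | u ∈ c.support}

/-- `E(C)`: the edge set of a cycle given as a closed walk. -/
def cycleEdges {G : SimpleGraph V} {v : V} (c : G.Walk v v) : Set (Sym2 V) :=
  {e | e ∈ c.edges}

/-- `G - E(C)`: the graph `G` with the edges of the cycle deleted. -/
def Gdel (G : SimpleGraph V) {v : V} (c : G.Walk v v) : SimpleGraph V :=
  G.deleteEdges (cycleEdges c)

/-- `V(D_y)`: the vertex set of the connected component of `G - E(C)`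
containing `y`. -/
def Dset (G : SimpleGraph V) {v : V} (c : G.Walk v v) (y : V) : Set V :=
  {u | (Gdel G c).Reachable u y}

/-- `D_y`: the connected component of `G - E(C)` containing `y`,
as an induced subgraph. -/
def Dgraph (G : SimpleGraph V) {v : V} (c : G.Walk v v) (y : V) :
    SimpleGraph ↥(Dset G c y) :=
  SimpleGraph.induce (Dset G c y) (Gdel G c)

/-- `D_y - y`: the component `D_y` with the vertex `y` deleted. -/
def DgraphMinus (G : SimpleGraph V) {v : V} (c : G.Walk v v) (y : V) :
    SimpleGraph ↥(Dset G c y \ {y}) :=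
  SimpleGraph.induce (Dset G c y \ {y}) (Gdel G c)

/-- `N₁(C)`: the vertices off the cycle having a neighbour on the cycle. -/
def N1 (G : SimpleGraph V) {v : V} (c : G.Walk v v) : Set V :=
  {u | u ∉ cycleVerts c ∧ ∃ w ∈ cycleVerts c, G.Adj u w}

section Basics

variable [Fintype V] (G : SimpleGraph V)

lemma bddAbove_indep : BddAbove {n | ∃ s : Set V, IsIndepSet G s ∧ s.ncard = n} := by
  refine ⟨Fintype.card V, ?_⟩
  rintro n ⟨s, -, rfl⟩
  calc s.ncard ≤ (Set.univ : Set V).ncard := Set.ncard_le_ncard (Set.subset_univ s) (Set.toFinite _)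
  _ = Fintype.card V := by rw [Set.ncard_univ, Nat.card_eq_fintype_card]

lemma bddAbove_matching : BddAbove {n | ∃ M : Set (Sym2 V), IsMatching G M ∧ M.ncard = n} := by
  refine ⟨Nat.card (Sym2 V), ?_⟩
  rintro n ⟨M, -, rfl⟩
  calc M.ncard ≤ (Set.univ : Set (Sym2 V)).ncard :=
      Set.ncard_le_ncard (Set.subset_univ M) (Set.toFinite _)
  _ = Nat.card (Sym2 V) := Set.ncard_univ _

lemma ncard_le_alpha {s : Set V} (hs : IsIndepSet G s) : s.ncard ≤ alpha G :=
  le_csSup (bddAbove_indep G) ⟨s, hs, rfl⟩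

lemma ncard_le_mu {M : Set (Sym2 V)} (hM : IsMatching G M) : M.ncard ≤ mu G :=
  le_csSup (bddAbove_matching G) ⟨M, hM, rfl⟩

lemma exists_alpha_set : ∃ s : Set V, IsIndepSet G s ∧ s.ncard = alpha G := by
  have h : alpha G ∈ {n | ∃ s : Set V, IsIndepSet G s ∧ s.ncard = n} := by
    apply Nat.sSup_mem _ (bddAbove_indep G)
    exact ⟨0, ∅, by simp [IsIndepSet], by simp⟩
  exact h

lemma exists_mu_set : ∃ M : Set (Sym2 V), IsMatching G M ∧ M.ncard = mu G := by
  have h : mu G ∈ {n | ∃ M : Set (Sym2 V), IsMatching G M ∧ M.ncard = n} := by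
    apply Nat.sSup_mem _ (bddAbove_matching G)
    exact ⟨0, ∅, ⟨by simp, by simp⟩, by simp⟩
  exact h

lemma alpha_add_mu_le : alpha G + mu G ≤ Nat.card V := by
  obtain ⟨S, hSi, hSc⟩ := exists_alpha_set G
  obtain ⟨M, hMm, hMc⟩ := exists_mu_set G
  rcases isEmpty_or_nonempty V with hV | hV
  · have hS0 : S = ∅ := Set.eq_empty_of_isEmpty S
    have hM0 : M = ∅ := Set.eq_empty_of_isEmpty M
    rw [← hSc, ← hMc, hS0, hM0]
    simp
  classical
  have hpick : ∀ e ∈ M, ∃ x, x ∈ e ∧ x ∉ S := by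
    intro e he
    have hedge : e ∈ G.edgeSet := hMm.1 he
    induction e with
    | h a b =>
      have hadj : G.Adj a b := hedge
      by_cases ha : a ∈ S
      · refine ⟨b, by simp, fun hb => ?_⟩
        exact hSi ha hb (G.ne_of_adj hadj) hadj
      · exact ⟨a, by simp, ha⟩
  choose f hf1 hf2 using hpick
  set g : Sym2 V → V := fun e => if h : e ∈ M then f e h else Classical.arbitrary V with hg
  have hinj : Set.InjOn g M := by
    intro e1 h1 e2 h2 heq
    by_contra hne
    have hdisj := hMm.2 h1 h2 hne
    have hg1 : g e1 = f e1 h1 := dif_pos h1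
    have hg2 : g e2 = f e2 h2 := dif_pos h2
    exact hdisj (g e1) (hg1 ▸ hf1 e1 h1) (by rw [heq, hg2]; exact hf1 e2 h2)
  have hsub : g '' M ⊆ Sᶜ := by
    rintro x ⟨e, he, rfl⟩
    have : g e = f e he := dif_pos he
    rw [this]
    exact hf2 e he
  have h1 : M.ncard ≤ Sᶜ.ncard := by
    rw [← Set.ncard_image_of_injOn hinj]
    exact Set.ncard_le_ncard hsub (Set.toFinite _)
  have h2 := Set.ncard_add_ncard_compl S
  omega

end Basics

section OddWalk

variable {G : SimpleGraph V}

lemma path_length_one_of_closing_edge :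
    ∀ {y u : V} (p : G.Walk y u), p.IsPath → s(u, y) ∈ p.edges → p.length = 1 := by
  intro y u p
  induction p with
  | nil => simp
  | @cons y z u h q ih =>
    intro hp hmem
    rw [SimpleGraph.Walk.edges_cons, List.mem_cons] at hmem
    rcases hmem with heq | hmem
    · rw [Sym2.eq_iff] at heq
      rcases heq with ⟨rfl, rfl⟩ | ⟨heq, -⟩
      · exact absurd rfl (G.ne_of_adj h)
      · subst heq
        cases q with
        | nil => simp
        | cons h' r =>
          exfalso
          have hnodup := hp.support_nodup
          rw [SimpleGraph.Walk.support_cons, List.nodup_cons] at hnodup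
          have h2 := hnodup.2
          rw [SimpleGraph.Walk.support_cons, List.nodup_cons] at h2
          exact h2.1 (SimpleGraph.Walk.end_mem_support r)
    · exfalso
      have hy : y ∈ q.support := SimpleGraph.Walk.snd_mem_support_of_mem_edges q hmem
      have hnodup := hp.support_nodup
      rw [SimpleGraph.Walk.support_cons, List.nodup_cons] at hnodup
      exact hnodup.1 hy

lemma exists_odd_cycle_of_odd_closed_walk :
    ∀ (n : ℕ) {u : V} (w : G.Walk u u), w.length = n → Odd n →
      ∃ (x : V) (q : G.Walk x x), q.IsCycle ∧ Odd q.length ∧ ∀ e ∈ q.edges, e ∈ w.edges := by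
  intro n
  induction n using Nat.strong_induction_on with
  | _ n ih =>
    intro u w hlen hodd
    classical
    by_cases hnd : w.support.tail.Nodup
    · -- w itself is a cycle
      cases w with
      | nil =>
        exfalso
        rw [SimpleGraph.Walk.length_nil] at hlen
        rw [← hlen] at hodd
        simp at hodd
      | @cons _ y _ h p =>
        rw [SimpleGraph.Walk.support_cons, List.tail_cons] at hnd
        have hpath : p.IsPath := SimpleGraph.Walk.IsPath.mk' hnd
        by_cases hmem : s(u, y) ∈ p.edges
        · exfalso
          have h1 := path_length_one_of_closing_edge p hpath hmem
          rw [SimpleGraph.Walk.length_cons, h1] at hlen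
          rw [← hlen] at hodd
          simp [Nat.odd_iff] at hodd
        · refine ⟨u, SimpleGraph.Walk.cons h p, ?_, ?_, fun e he => he⟩
          · exact (SimpleGraph.Walk.cons_isCycle_iff p h).mpr ⟨hpath, hmem⟩
          · rw [hlen]; exact hodd
    · -- repeated vertex: split into two shorter closed walks
      obtain ⟨x, hdup⟩ := List.exists_duplicate_iff_not_nodup.mpr hnd
      have hx : x ∈ w.support := List.mem_of_mem_tail hdup.mem
      set q := w.rotate x hx with hq
      have hqlen : q.length = n := by
        have h1 : List.Perm q.edges w.edges := (SimpleGraph.Walk.rotate_edges w x hx).perm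
        have := h1.length_eq
        rwa [SimpleGraph.Walk.length_edges, SimpleGraph.Walk.length_edges, hlen] at this
      have hqcount : 2 ≤ List.count x q.support.tail := by
        have h1 : List.Perm q.support.tail w.support.tail := (SimpleGraph.Walk.support_rotate w x hx).perm
        rw [h1.count_eq]
        exact List.duplicate_iff_two_le_count.mp hdup
      have hqedges : ∀ e ∈ q.edges, e ∈ w.edges := fun e he =>
        (SimpleGraph.Walk.rotate_edges w x hx).perm.mem_iff.mp he
      clear_value q
      cases q with
      | nil =>
        exfalso
        rw [SimpleGraph.Walk.length_nil] at hqlen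
        rw [← hqlen] at hodd
        simp at hodd
      | @cons _ z _ hadj p =>
        rw [SimpleGraph.Walk.support_cons, List.tail_cons] at hqcount
        have hxp : x ∈ p.support := List.count_pos_iff.mp (by omega)
        set a := p.takeUntil x hxp with ha
        set b := p.dropUntil x hxp with hb
        have hspec : a.append b = p := SimpleGraph.Walk.take_spec p hxp
        have hcount1 : List.count x a.support = 1 :=
          SimpleGraph.Walk.count_support_takeUntil_eq_one p hxp
        have hcount2 : 1 ≤ List.count x b.support.tail := by
          have hcc : List.count x p.support
              = List.count x a.support + List.count x b.support.tail := by
            conv_lhs => rw [← hspec]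
            rw [SimpleGraph.Walk.support_append, List.count_append]
          omega
        have hblen : 1 ≤ b.length := by
          have h0 : b.support.tail ≠ [] := by
            intro hE
            rw [hE] at hcount2
            simp at hcount2
          have h1 : b.support.tail.length = b.length := by
            have := SimpleGraph.Walk.length_support b
            rw [List.length_tail, this]
            omega
          have h2 : 0 < b.support.tail.length := List.length_pos_iff.mpr h0
          omega
        have hlen_ab : a.length + b.length = p.length := by
          conv_rhs => rw [← hspec]
          rw [SimpleGraph.Walk.length_append]
        have hqn : a.length + 1 + b.length = n := by
          rw [← hqlen, SimpleGraph.Walk.length_cons]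
          omega
        have hedge_a : ∀ e ∈ (SimpleGraph.Walk.cons hadj a).edges, e ∈ w.edges := by
          intro e he
          apply hqedges
          rw [SimpleGraph.Walk.edges_cons] at he ⊢
          rcases List.mem_cons.mp he with heq | hea
          · exact List.mem_cons.mpr (Or.inl heq)
          · refine List.mem_cons.mpr (Or.inr ?_)
            rw [← hspec, SimpleGraph.Walk.edges_append]
            exact List.mem_append.mpr (Or.inl hea)
        have hedge_b : ∀ e ∈ b.edges, e ∈ w.edges := by
          intro e he
          apply hqedges
          rw [SimpleGraph.Walk.edges_cons]
          refine List.mem_cons.mpr (Or.inr ?_)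
          rw [← hspec, SimpleGraph.Walk.edges_append]
          exact List.mem_append.mpr (Or.inr he)
        rcases Nat.even_or_odd b.length with hbp | hbp
        · -- cons hadj a is the odd closed walk
          have hoa : Odd (a.length + 1) := by
            rw [Nat.odd_iff] at hodd ⊢
            rw [Nat.even_iff] at hbp
            omega
          obtain ⟨x', q', hcyc, hoddq, hsub⟩ :=
            ih (a.length + 1) (by omega) (SimpleGraph.Walk.cons hadj a)
              (by rw [SimpleGraph.Walk.length_cons]) hoa
          exact ⟨x', q', hcyc, hoddq, fun e he => hedge_a e (hsub e he)⟩
        · obtain ⟨x', q', hcyc, hoddq, hsub⟩ :=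
            ih b.length (by omega) b rfl hbp
          exact ⟨x', q', hcyc, hoddq, fun e he => hedge_b e (hsub e he)⟩

end OddWalk

section Coloring

lemma exists_bipartition (H : SimpleGraph V)
    (hno : ∀ (u : V) (w : H.Walk u u), ¬ Odd w.length) :
    ∃ f : V → Bool, ∀ a b, H.Adj a b → f a ≠ f b := by
  classical
  have hre : ∀ v : V, H.Reachable ((H.connectedComponentMk v).out) v := by
    intro v
    rw [← SimpleGraph.ConnectedComponent.eq]
    exact Quot.out_eq _
  set wf : ∀ v : V, H.Walk ((H.connectedComponentMk v).out) v :=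
    fun v => (hre v).some with hwf
  refine ⟨fun v => decide (Odd (wf v).length), ?_⟩
  intro a b hab hEq
  rw [decide_eq_decide] at hEq
  have hcomp : H.connectedComponentMk a = H.connectedComponentMk b :=
    SimpleGraph.ConnectedComponent.sound hab.reachable
  have hout : (H.connectedComponentMk a).out = (H.connectedComponentMk b).out := by
    rw [hcomp]
  set cw : H.Walk a a :=
    (wf a).reverse.append (((wf b).copy hout.symm rfl).append
      (SimpleGraph.Walk.cons hab.symm SimpleGraph.Walk.nil)) with hcw
  apply hno a cw
  have hlen : cw.length = (wf a).length + ((wf b).length + 1) := by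
    rw [hcw]
    rw [SimpleGraph.Walk.length_append, SimpleGraph.Walk.length_append,
      SimpleGraph.Walk.length_reverse, SimpleGraph.Walk.length_copy,
      SimpleGraph.Walk.length_cons, SimpleGraph.Walk.length_nil]
  rw [hlen]
  rw [Nat.odd_iff, Nat.odd_iff] at hEq
  rw [Nat.odd_iff]
  omega

end Coloring

section Konig

variable [Fintype V]

lemma konig (H : SimpleGraph V) (f : V → Bool)
    (hf : ∀ a b, H.Adj a b → f a ≠ f b) :
    ∃ (S : Set V) (M : Set (Sym2 V)), IsIndepSet H S ∧ IsMatching H M ∧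
      Nat.card V ≤ S.ncard + M.ncard := by
  classical
  set A : Finset V := Finset.univ.filter (fun v => f v = true) with hA
  set B : Finset V := Finset.univ.filter (fun v => ¬ (f v = true)) with hB
  have hABcard : A.card + B.card = Fintype.card V := by
    rw [hA, hB, Finset.card_filter_add_card_filter_not, Finset.card_univ]
  have hmemA : ∀ v, v ∈ A ↔ f v = true := by intro v; simp [hA]
  have hmemB : ∀ v, v ∈ B ↔ f v = false := by intro v; simp [hB]
  set nb : V → Finset V := fun a => Finset.univ.filter (fun b => H.Adj a b) with hnb
  have hmemnb : ∀ a b, b ∈ nb a ↔ H.Adj a b := by intro a b; simp [hnb]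
  set NB : Finset V → Finset V := fun T => T.biUnion nb with hNB
  have hNB_B : ∀ T, T ⊆ A → NB T ⊆ B := by
    intro T hT b hb
    rw [hNB] at hb
    obtain ⟨a, haT, hbnb⟩ := Finset.mem_biUnion.mp hb
    have hadj : H.Adj a b := (hmemnb a b).mp hbnb
    have hfa : f a = true := (hmemA a).mp (hT haT)
    have hne := hf a b hadj
    rw [hfa] at hne
    refine (hmemB b).mpr ?_
    cases hfb' : f b
    · rfl
    · exact absurd hfb'.symm hne
  set d : ℕ := A.powerset.sup (fun T => T.card - (NB T).card) with hd
  have hdle : ∀ T, T ⊆ A → T.card - (NB T).card ≤ d := by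
    intro T hT
    rw [hd]
    exact Finset.le_sup (f := fun T => T.card - (NB T).card) (Finset.mem_powerset.mpr hT)
  have hTex : ∃ T, T ⊆ A ∧ (NB T).card ≤ T.card ∧ T.card - (NB T).card = d := by
    obtain ⟨T0, hT0mem, hT0⟩ := Finset.exists_mem_eq_sup A.powerset
      ⟨∅, Finset.empty_mem_powerset A⟩ (fun T => T.card - (NB T).card)
    rw [← hd] at hT0
    by_cases hc : (NB T0).card ≤ T0.card
    · exact ⟨T0, Finset.mem_powerset.mp hT0mem, hc, hT0.symm⟩
    · refine ⟨∅, Finset.empty_subset A, by rw [hNB]; simp, ?_⟩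
      have h0 : d = 0 := by omega
      simp only [Finset.card_empty]
      omega
  obtain ⟨T, hTA, hTle, hTd⟩ := hTex
  -- Hall's theorem
  set t : ↥A → Finset (V ⊕ Fin d) :=
    fun a => (nb (a : V)).image Sum.inl ∪ Finset.univ.image (Sum.inr : Fin d → V ⊕ Fin d)
    with ht
  have hHall : ∀ s : Finset ↥A, s.card ≤ (s.biUnion t).card := by
    intro s
    rcases s.eq_empty_or_nonempty with rfl | hs
    · simp
    · set T' : Finset V := s.image (Subtype.val) with hT'
      have hT'A : T' ⊆ A := by
        rw [hT']
        intro v hv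
        obtain ⟨a, -, rfl⟩ := Finset.mem_image.mp hv
        exact a.2
      have hT'card : T'.card = s.card := Finset.card_image_of_injective s Subtype.val_injective
      have hsbU : s.biUnion t = (NB T').image Sum.inl ∪
          Finset.univ.image (Sum.inr : Fin d → V ⊕ Fin d) := by
        ext e
        simp only [Finset.mem_biUnion, Finset.mem_union]
        constructor
        · rintro ⟨a, has, hat⟩
          rw [ht] at hat
          rcases Finset.mem_union.mp hat with h1 | h1
          · obtain ⟨b, hb, rfl⟩ := Finset.mem_image.mp h1
            refine Or.inl (Finset.mem_image.mpr ⟨b, ?_, rfl⟩)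
            rw [hNB]
            exact Finset.mem_biUnion.mpr ⟨(a : V), Finset.mem_image.mpr ⟨a, has, rfl⟩, hb⟩
          · exact Or.inr h1
        · rintro (h1 | h1)
          · obtain ⟨b, hb, rfl⟩ := Finset.mem_image.mp h1
            rw [hNB] at hb
            obtain ⟨v, hv, hbnb⟩ := Finset.mem_biUnion.mp hb
            rw [hT'] at hv
            obtain ⟨a, has, rfl⟩ := Finset.mem_image.mp hv
            refine ⟨a, has, ?_⟩
            rw [ht]
            exact Finset.mem_union.mpr (Or.inl (Finset.mem_image.mpr ⟨b, hbnb, rfl⟩))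
          · obtain ⟨a, has⟩ := hs
            refine ⟨a, has, ?_⟩
            rw [ht]
            exact Finset.mem_union.mpr (Or.inr h1)
      rw [hsbU]
      have hdisj : Disjoint ((NB T').image (Sum.inl : V → V ⊕ Fin d))
          (Finset.univ.image (Sum.inr : Fin d → V ⊕ Fin d)) := by
        rw [Finset.disjoint_left]
        rintro e h1 h2
        obtain ⟨b, -, rfl⟩ := Finset.mem_image.mp h1
        obtain ⟨r, -, he⟩ := Finset.mem_image.mp h2
        simp at he
      rw [Finset.card_union_of_disjoint hdisj,
        Finset.card_image_of_injective _ Sum.inl_injective,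
        Finset.card_image_of_injective _ Sum.inr_injective, Finset.card_univ, Fintype.card_fin]
      have := hdle T' hT'A
      omega
  obtain ⟨g, hginj, hgmem⟩ :=
    (Finset.all_card_le_biUnion_card_iff_existsInjective' t).mp hHall
  -- extract the matching
  set ext : ↥A → V := fun a => Sum.elim id (fun _ => (a : V)) (g a) with hext
  set Aleft : Finset ↥A := Finset.univ.filter (fun a => (g a).isLeft) with hAleft
  have hleft : ∀ a ∈ Aleft, g a = Sum.inl (ext a) ∧ H.Adj (a : V) (ext a) := by
    intro a ha
    rw [hAleft, Finset.mem_filter] at ha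
    obtain ⟨v, hv⟩ := Sum.isLeft_iff.mp ha.2
    have hv' : ext a = v := by rw [hext]; simp [hv]
    have hmem := hgmem a
    rw [ht, hv] at hmem
    rcases Finset.mem_union.mp hmem with h1 | h1
    · obtain ⟨b, hb, hbe⟩ := Finset.mem_image.mp h1
      have hbv : b = v := by simpa using hbe
      subst hbv
      exact ⟨by rw [hv, hv'], hv' ▸ (hmemnb _ _).mp hb⟩
    · obtain ⟨r, -, hre⟩ := Finset.mem_image.mp h1
      simp at hre
  set M0 : Finset (Sym2 V) := Aleft.image (fun a : ↥A => s((a : V), ext a)) with hM0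
  have hcolors : ∀ a ∈ Aleft, f (a : V) = true ∧ f (ext a) = false := by
    intro a ha
    have h1 := (hleft a ha).2
    have hfa : f (a : V) = true := (hmemA _).mp a.2
    refine ⟨hfa, ?_⟩
    have hne := hf _ _ h1
    rw [hfa] at hne
    cases hfb' : f (ext a)
    · rfl
    · exact absurd hfb'.symm hne
  have hM0inj : Set.InjOn (fun a : ↥A => s((a : V), ext a)) ↑Aleft := by
    intro a1 h1 a2 h2 heq
    simp only [Sym2.eq_iff] at heq
    have hc1 := hcolors a1 (by simpa using h1)
    have hc2 := hcolors a2 (by simpa using h2)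
    rcases heq with ⟨hv, -⟩ | ⟨hv1, hv2⟩
    · exact Subtype.ext hv
    · rw [← hv1] at hc2
      rw [hc1.1] at hc2
      simp at hc2
  have hM0card : M0.card = Aleft.card := by
    rw [hM0]
    exact Finset.card_image_of_injOn hM0inj
  have hAleftcard : A.card ≤ Aleft.card + d := by
    set Aright : Finset ↥A := Finset.univ.filter (fun a => ¬ (g a).isLeft) with hAright
    have hsplit : Aleft.card + Aright.card = A.card := by
      rw [hAleft, hAright, Finset.card_filter_add_card_filter_not, Finset.card_univ]
      simp
    have hright : Aright.card ≤ d := by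
      rcases Aright.eq_empty_or_nonempty with he | ⟨a0, ha0⟩
      · rw [he]; simp
      · have ha0' := ha0
        rw [hAright, Finset.mem_filter] at ha0'
        obtain ⟨r0, hr0⟩ := Sum.isRight_iff.mp (Sum.not_isLeft.mp ha0'.2)
        have hcard : Aright.card ≤ (Finset.univ : Finset (Fin d)).card := by
          apply Finset.card_le_card_of_injOn (fun a => ((g a).getRight?).getD r0)
          · intro a _; exact Finset.mem_univ _
          · intro a1 h1 a2 h2 heq
            simp only [hAright, Finset.mem_coe, Finset.mem_filter] at h1 h2
            obtain ⟨r1, hr1⟩ := Sum.isRight_iff.mp (Sum.not_isLeft.mp h1.2)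
            obtain ⟨r2, hr2⟩ := Sum.isRight_iff.mp (Sum.not_isLeft.mp h2.2)
            simp only [hr1, hr2, Sum.getRight?_inr, Option.getD_some] at heq
            apply hginj
            rw [hr1, hr2, heq]
        simpa using hcard
    omega
  -- the independent set
  have hdisjTB : Disjoint T (B \ NB T) := by
    rw [Finset.disjoint_left]
    intro a haT haB
    have h1 : f a = true := (hmemA a).mp (hTA haT)
    have h2 : f a = false := (hmemB a).mp (Finset.mem_sdiff.mp haB).1
    rw [h1] at h2
    exact Bool.noConfusion h2
  set SF : Finset V := T ∪ (B \ NB T) with hSF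
  have hSind : IsIndepSet H (↑SF : Set V) := by
    intro a ha b hb hne hadj
    rw [Finset.mem_coe, hSF, Finset.mem_union] at ha hb
    have hNBmem : ∀ x y, x ∈ T → H.Adj x y → y ∈ NB T := by
      intro x y hx hxy
      rw [hNB]
      exact Finset.mem_biUnion.mpr ⟨x, hx, (hmemnb x y).mpr hxy⟩
    rcases ha with haT | haB <;> rcases hb with hbT | hbB
    · have h1 : f a = true := (hmemA a).mp (hTA haT)
      have h2 : f b = true := (hmemA b).mp (hTA hbT)
      exact hf a b hadj (h1.trans h2.symm)
    · exact (Finset.mem_sdiff.mp hbB).2 (hNBmem a b haT hadj)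
    · exact (Finset.mem_sdiff.mp haB).2 (hNBmem b a hbT hadj.symm)
    · have h1 : f a = false := (hmemB a).mp (Finset.mem_sdiff.mp haB).1
      have h2 : f b = false := (hmemB b).mp (Finset.mem_sdiff.mp hbB).1
      exact hf a b hadj (h1.trans h2.symm)
  have hScard : SF.card = T.card + (B.card - (NB T).card) := by
    rw [hSF, Finset.card_union_of_disjoint hdisjTB, Finset.card_sdiff_of_subset (hNB_B T hTA)]
  -- the matching
  have hMmatch : IsMatching H (↑M0 : Set (Sym2 V)) := by
    constructor
    · intro e he
      rw [Finset.mem_coe, hM0] at he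
      obtain ⟨a, ha, rfl⟩ := Finset.mem_image.mp he
      exact (hleft a ha).2
    · intro e1 h1 e2 h2 hne x hx1 hx2
      rw [Finset.mem_coe, hM0] at h1 h2
      obtain ⟨a1, ha1, rfl⟩ := Finset.mem_image.mp h1
      obtain ⟨a2, ha2, rfl⟩ := Finset.mem_image.mp h2
      have hc1 := hcolors a1 ha1
      have hc2 := hcolors a2 ha2
      rw [Sym2.mem_iff] at hx1 hx2
      rcases hx1 with rfl | rfl <;> rcases hx2 with hx | hx
      · exact hne (by rw [Subtype.ext hx])
      · rw [hx, hc2.2] at hc1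
        exact Bool.noConfusion hc1.1
      · rw [← hx, hc1.2] at hc2
        exact Bool.noConfusion hc2.1
      · have hg12 : g a1 = g a2 := by
          rw [(hleft a1 ha1).1, (hleft a2 ha2).1, hx]
        exact hne (by rw [hginj hg12])
  refine ⟨↑SF, ↑M0, hSind, hMmatch, ?_⟩
  rw [Set.ncard_coe_finset, Set.ncard_coe_finset, hScard, hM0card, Nat.card_eq_fintype_card]
  have hNBT_B : (NB T).card ≤ B.card := Finset.card_le_card (hNB_B T hTA)
  have hTcard : T.card ≤ A.card := Finset.card_le_card hTA
  omega

end Konig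

section Assembly

lemma exists_incident_edge {G : SimpleGraph V} :
    ∀ {a b : V} (p : G.Walk a b) {x : V}, x ∈ p.support →
      x = b ∨ ∃ t, s(x, t) ∈ p.edges := by
  intro a b p
  induction p with
  | nil =>
    intro x hx
    left
    simpa using hx
  | @cons u w b' h q ih =>
    intro x hx
    rw [SimpleGraph.Walk.support_cons, List.mem_cons] at hx
    rcases hx with rfl | hx
    · right
      exact ⟨w, by rw [SimpleGraph.Walk.edges_cons]; exact List.mem_cons_self⟩
    · rcases ih hx with h1 | ⟨t, ht⟩
      · exact Or.inl h1
      · exact Or.inr ⟨t, by rw [SimpleGraph.Walk.edges_cons]; exact List.mem_cons_of_mem _ ht⟩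

lemma exists_incident_edge_closed {G : SimpleGraph V} {u : V} (w : G.Walk u u)
    (hne : w ≠ SimpleGraph.Walk.nil) {x : V} (hx : x ∈ w.support) :
    ∃ t, s(x, t) ∈ w.edges := by
  rcases exists_incident_edge w hx with rfl | h
  · cases w with
    | nil => exact absurd rfl hne
    | @cons _ z _ h q =>
      exact ⟨z, by rw [SimpleGraph.Walk.edges_cons]; exact List.mem_cons_self⟩
  · exact h

section Key

variable [Fintype V]

lemma key_lemma (G : SimpleGraph V) {v : V} (c : G.Walk v v)
    (huniq : UniqueOddCycle G c) (hKE : ¬ KonigEgervary G) {x y : V}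
    (hxy : s(x, y) ∈ c.edges) :
    ∃ S : Set V, x ∈ S ∧ y ∈ S ∧ (S \ {x}) ∈ Omega G ∧ (S \ {y}) ∈ Omega G := by
  classical
  have he0G : s(x, y) ∈ G.edgeSet := c.edges_subset_edgeSet hxy
  have hadjxy : G.Adj x y := he0G
  set H : SimpleGraph V := G.deleteEdges {s(x, y)} with hH
  have hHle : H ≤ G := SimpleGraph.deleteEdges_le _
  -- no odd closed walk in H
  have hno : ∀ (u : V) (w : H.Walk u u), ¬ Odd w.length := by
    intro u w hodd
    obtain ⟨x', q, hq, hqodd, hqsub⟩ :=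
      exists_odd_cycle_of_odd_closed_walk w.length w rfl hodd
    have hqG : ∀ e ∈ q.edges, e ∈ G.edgeSet :=
      fun e he => SimpleGraph.edgeSet_mono hHle (q.edges_subset_edgeSet he)
    set q' : G.Walk x' x' := q.transfer G hqG with hq'
    have hq'c : q'.IsCycle := hq.transfer hqG
    have hq'odd : Odd q'.length := by
      rw [hq', SimpleGraph.Walk.length_transfer]
      exact hqodd
    have hedges := huniq.2 x' q' ⟨hq'c, hq'odd⟩
    have he0q' : s(x, y) ∈ q'.edges := by
      have hmem : s(x, y) ∈ {e | e ∈ c.edges} := hxy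
      rw [← hedges] at hmem
      exact hmem
    rw [hq', SimpleGraph.Walk.edges_transfer] at he0q'
    have hin : s(x, y) ∈ H.edgeSet := q.edges_subset_edgeSet he0q'
    rw [hH, SimpleGraph.edgeSet_deleteEdges] at hin
    exact hin.2 rfl
  obtain ⟨f, hfcol⟩ := exists_bipartition H hno
  obtain ⟨S, M, hSind, hMmatch, hcard⟩ := konig H f hfcol
  have hMG : IsMatching G M :=
    ⟨fun e he => SimpleGraph.edgeSet_mono hHle (hMmatch.1 he), hMmatch.2⟩
  have hMle : M.ncard ≤ mu G := ncard_le_mu G hMG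
  have hlt : alpha G + mu G < Nat.card V :=
    lt_of_le_of_ne (alpha_add_mu_le G) hKE
  have hSge : alpha G + 1 ≤ S.ncard := by omega
  have honly : ∀ a ∈ S, ∀ b ∈ S, G.Adj a b → s(a, b) = s(x, y) := by
    intro a ha b hb hab
    by_contra hne
    refine hSind ha hb (G.ne_of_adj hab) ?_
    rw [hH, SimpleGraph.deleteEdges_adj]
    exact ⟨hab, by simpa using hne⟩
  have hSnotindep : ¬ IsIndepSet G S := by
    intro h
    have := ncard_le_alpha G h
    omega
  have hxyS : x ∈ S ∧ y ∈ S := by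
    by_contra hcon
    apply hSnotindep
    intro a ha b hb hne hab
    have he := honly a ha b hb hab
    rw [Sym2.eq_iff] at he
    rcases he with ⟨rfl, rfl⟩ | ⟨rfl, rfl⟩
    · exact hcon ⟨ha, hb⟩
    · exact hcon ⟨hb, ha⟩
  have hrem : ∀ z w : V, s(z, w) = s(x, y) → z ∈ S → (S \ {z}) ∈ Omega G := by
    intro z w hzw hzS
    have hind : IsIndepSet G (S \ {z}) := by
      intro a ha b hb hne hab
      have he := honly a ha.1 b hb.1 hab
      rw [← hzw, Sym2.eq_iff] at he
      rcases he with ⟨rfl, -⟩ | ⟨-, rfl⟩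
      · exact ha.2 rfl
      · exact hb.2 rfl
    have hcard1 : (S \ {z}).ncard = S.ncard - 1 := by
      rw [Set.ncard_diff_singleton_of_mem hzS]
    have hle : (S \ {z}).ncard ≤ alpha G := ncard_le_alpha G hind
    have hge : alpha G ≤ (S \ {z}).ncard := by
      have hfin : S.Finite := Set.toFinite _
      omega
    exact ⟨hind, le_antisymm hle hge⟩
  refine ⟨S, hxyS.1, hxyS.2, hrem x y rfl hxyS.1, hrem y x (Sym2.eq_swap) hxyS.2⟩

theorem stmt_3' (G : SimpleGraph V) (v : V)
    (c : G.Walk v v) (huniq : UniqueOddCycle G c)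
    (hKE : ¬ KonigEgervary G) :
    core G ∩ (cycleVerts c ∪ nbhd G (cycleVerts c)) = ∅ := by
  rw [Set.eq_empty_iff_forall_notMem]
  rintro z ⟨hzcore, hzN⟩
  have hcne : c ≠ SimpleGraph.Walk.nil := huniq.1.1.ne_nil
  rcases hzN with hzC | hzNb
  · obtain ⟨t, ht⟩ := exists_incident_edge_closed c hcne hzC
    obtain ⟨S, hxS, hyS, hOm1, hOm2⟩ := key_lemma G c huniq hKE ht
    exact (hzcore _ hOm1).2 rfl
  · obtain ⟨a, haC, hadj⟩ := hzNb
    obtain ⟨t, ht⟩ := exists_incident_edge_closed c hcne haC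
    obtain ⟨S, haS, htS, hOm1, hOm2⟩ := key_lemma G c huniq hKE ht
    have hadjat : G.Adj a t := c.edges_subset_edgeSet ht
    have hz : z ∈ S \ {t} := hzcore _ hOm2
    have ha : a ∈ S \ {t} := ⟨haS, fun h => G.ne_of_adj hadjat (by simpa using h)⟩
    exact hOm2.1 hz ha (G.ne_of_adj hadj) hadj

end Key

end Assembly

end AlmostBip

open AlmostBip

/-- If `G` is an almost bipartite non-König-Egerváry graph with unique odd cycle `C`,
then `core(G) ∩ N[V(C)] = ∅`. -/
theorem stmt_3 {V : Type*} [Fintype V] (G : SimpleGraph V) (v : V)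
    (c : G.Walk v v) (huniq : UniqueOddCycle G c)
    (hKE : ¬ KonigEgervary G) :
    core G ∩ (cycleVerts c ∪ nbhd G (cycleVerts c)) = ∅ :=
  AlmostBip.stmt_3' G v c huniq hKE
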